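/- Let k, q, r be positive natural numbers with k > q, set k₁ = k − q. Let Ξ₁₁ ∈ ℝ^{k₁×r}, Ξ₁₂ ∈ ℝ^{k₁×q}, Ξ₂₁ ∈ ℝ^{q×r} be fixed, and for t ∈ ℝ let Ξ₂₂(t) ∈ ℝ^{q×q} be invertible with Ξ₂₂(t)^{-1} → 0 as t → ∞. Let B(t) = Ξ₂₂(t)^{-1}Ξ₂₁, O11(t) = (I_r + B(t)ᵀB(t))^{-1/2}, O22(t) = (I_q + B(t)B(t)ᵀ)^{-1/2}, and define Ξ̃₁₁(t) = (Ξ₁₁ − Ξ₁₂Ξ₂₂(t)^{-1}Ξ₂₁)·O11(t), Ξ̃₁₂(t) = (Ξ₁₁Ξ₂₁ᵀ(Ξ₂₂(t)^{-1})ᵀ + Ξ₁₂)·O22(t), Ξ̃₂₂(t) = (Ξ₂₁Ξ₂₁ᵀ(Ξ₂₂(t)^{-1})ᵀ + Ξ₂₂(t))·O22(t). Then, as t → ∞: O11(t) → I_r, O22(t) → I_q, Ξ̃₁₁(t) → Ξ₁₁, Ξ̃₁₂(t) → Ξ₁₂, and Ξ̃₂₂(t) − Ξ₂₂(t) → 0.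 -/

import Mathlib

/-!
The matrices `O11`, `O22` are `x ↦ x^{-1/2}` applied to `1 + M` with `M = BᵀB` or `BBᵀ` positive
semidefinite and `M → 0`; since the continuous functional calculus is continuous in its argument,
both tend to `1`, and the first four limits follow by continuity of the matrix operations.
The last limit is subtler because `Ξ₂₂(t)` blows up. Writing `x^{-1/2} - 1 = (x - 1) h(x)` with
`h(x) = -1 / (√x (1 + √x))` gives `Ξ₂₂ (O22 - 1) = Ξ₂₂ BBᵀ h(1 + BBᵀ) = Ξ₂₁ Bᵀ h(1 + BBᵀ)`,
which tends to `0 · h(1) = 0`.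
-/

open Matrix Filter

/-- Inverse of the unique symmetric positive semidefinite square root of a positive
(semi)definite real matrix (junk value `0` if `P` is not positive semidefinite). -/
noncomputable def invSqrt {n : Type*} [Fintype n] [DecidableEq n]
    (P : Matrix n n ℝ) : Matrix n n ℝ := by
  classical exact if h : P.PosSemidef then (h.1.eigenvectorUnitary.1 * diagonal ((↑) ∘ (√·) ∘ h.1.eigenvalues) *
    (star h.1.eigenvectorUnitary : Matrix n n ℝ))⁻¹ else 0

open Set Topology

section MatrixLimits

variable {α l m n R : Type*} [TopologicalSpace R] {F : Filter α}

lemma Filter.Tendsto.matrix_mul [Fintype m] [Mul R] [AddCommMonoid R] [ContinuousAdd R]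
    [ContinuousMul R] {f : α → Matrix l m R} {g : α → Matrix m n R} {A : Matrix l m R}
    {B : Matrix m n R} (hf : Tendsto f F (𝓝 A)) (hg : Tendsto g F (𝓝 B)) :
    Tendsto (fun x => f x * g x) F (𝓝 (A * B)) :=
  ((continuous_fst.matrix_mul continuous_snd).tendsto (A, B)).comp (hf.prodMk_nhds hg)

lemma Filter.Tendsto.matrix_transpose {f : α → Matrix m n R} {A : Matrix m n R}
    (hf : Tendsto f F (𝓝 A)) : Tendsto (fun x => (f x)ᵀ) F (𝓝 Aᵀ) :=
  (continuous_id.matrix_transpose.tendsto A).comp hf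

end MatrixLimits

lemma Matrix.posSemidef_transpose_mul_self {m n : Type*} [Fintype m] [Fintype n]
    (A : Matrix m n ℝ) : (Aᵀ * A).PosSemidef := by
  simpa using posSemidef_conjTranspose_mul_self A

lemma Matrix.posSemidef_self_mul_transpose {m n : Type*} [Fintype m] [Fintype n]
    (A : Matrix m n ℝ) : (A * Aᵀ).PosSemidef := by
  simpa using posSemidef_self_mul_conjTranspose A

lemma continuousOn_inv_sqrt : ContinuousOn (fun x : ℝ => (√x)⁻¹) (Ioi 0) :=
  Real.continuous_sqrt.continuousOn.inv₀ fun _ hx => (Real.sqrt_pos.2 hx).ne'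

lemma continuousOn_neg_inv_sqrt_mul_one_add_sqrt :
    ContinuousOn (fun x : ℝ => -(√x * (1 + √x))⁻¹) (Ioi 0) :=
  (ContinuousOn.inv₀ (by fun_prop) fun _ hx =>
    (mul_pos (Real.sqrt_pos.2 hx) (by positivity)).ne').neg

section InvSqrt

variable {n : Type*} [Fintype n] [DecidableEq n]

open scoped MatrixOrder in
lemma Matrix.PosDef.spectrum_subset_Ioi {P : Matrix n n ℝ} (hP : P.PosDef) :
    spectrum ℝ P ⊆ Ioi 0 :=
  fun _ hx => hP.isStrictlyPositive.spectrum_pos hx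

lemma invSqrt_eq_inv_cfc_sqrt {P : Matrix n n ℝ} (hP : P.PosSemidef) :
    invSqrt P = (cfc Real.sqrt P)⁻¹ := by
  rw [invSqrt, dif_pos hP, hP.isHermitian.cfc_eq]
  rfl

lemma invSqrt_eq_cfc {P : Matrix n n ℝ} (hP : P.PosDef) :
    invSqrt P = cfc (fun x => (√x)⁻¹) P := by
  have hsa : IsSelfAdjoint P := hP.isHermitian
  have := continuousOn_inv_sqrt.mono hP.spectrum_subset_Ioi
  rw [invSqrt_eq_inv_cfc_sqrt hP.posSemidef]
  refine inv_eq_left_inv ?_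
  rw [← cfc_mul .., ← cfc_one ℝ P]
  exact cfc_congr fun x hx => inv_mul_cancel₀ (Real.sqrt_pos.2 (hP.spectrum_subset_Ioi hx)).ne'

lemma invSqrt_one_add_sub_one {M : Matrix n n ℝ} (hM : M.PosSemidef) :
    invSqrt (1 + M) - 1 = M * cfc (fun x => -(√x * (1 + √x))⁻¹) (1 + M) := by
  have hP := PosDef.one.add_posSemidef hM
  have hsa : IsSelfAdjoint (1 + M) := hP.isHermitian
  have := continuousOn_inv_sqrt.mono hP.spectrum_subset_Ioi
  calc invSqrt (1 + M) - 1 = cfc (fun x => (√x)⁻¹ - 1) (1 + M) := by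
        rw [invSqrt_eq_cfc hP, cfc_sub .., cfc_const_one ℝ (1 + M)]
    _ = cfc (fun x => (x - 1) * -(√x * (1 + √x))⁻¹) (1 + M) := by
        refine cfc_congr fun x hx => ?_
        have hx : 0 < x := hP.spectrum_subset_Ioi hx
        have hs : 0 < √x := Real.sqrt_pos.2 hx
        have hsq : √x ^ 2 = x := Real.sq_sqrt hx.le
        field_simp
        nlinarith
    _ = M * cfc (fun x => -(√x * (1 + √x))⁻¹) (1 + M) := by
        rw [cfc_mul (fun x => x - 1) _ _ (by fun_prop)
          (continuousOn_neg_inv_sqrt_mul_one_add_sqrt.mono hP.spectrum_subset_Ioi),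
          cfc_sub .., cfc_id' .., cfc_const_one ℝ (1 + M), add_sub_cancel_left]

section Tendsto

variable {α : Type*} {l : Filter α} {M : α → Matrix n n ℝ}

-- With the L2 operator norm, real matrices form a C⋆-algebra with an isometric functional
-- calculus, which is what continuity of `cfc` in its argument needs; the topology is the usual one.
open scoped Matrix.Norms.L2Operator in
lemma tendsto_cfc_one_add {g : ℝ → ℝ} (hg : ContinuousOn g (Ioi 0))
    (hM : ∀ t, (M t).PosSemidef) (hlim : Tendsto M l (𝓝 0)) :
    Tendsto (fun t => cfc g (1 + M t)) l (𝓝 (algebraMap ℝ _ (g 1))) := by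
  have hcont : ContinuousOn (fun A : Matrix n n ℝ => cfc g (1 + A)) {A | A.PosSemidef} := by
    refine ContinuousOn.cfc_of_mem_nhdsSet g (isOpen_Ioi.mem_nhdsSet.2 ?_) (by fun_prop)
      (fun A hA => (PosDef.one.add_posSemidef hA).isHermitian) hg
    simp only [iUnion_subset_iff]
    exact fun A hA => (PosDef.one.add_posSemidef hA).spectrum_subset_Ioi
  have h0 := (hcont 0 PosSemidef.zero).tendsto.comp
    (tendsto_nhdsWithin_iff.2 ⟨hlim, .of_forall hM⟩)
  simpa [Function.comp_def, ← Algebra.algebraMap_eq_smul_one, cfc_algebraMap] using h0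

lemma tendsto_invSqrt_one_add (hM : ∀ t, (M t).PosSemidef) (hlim : Tendsto M l (𝓝 0)) :
    Tendsto (fun t => invSqrt (1 + M t)) l (𝓝 1) := by
  simpa using (tendsto_cfc_one_add continuousOn_inv_sqrt hM hlim).congr
    fun t => (invSqrt_eq_cfc (PosDef.one.add_posSemidef (hM t))).symm

lemma tendsto_mul_invSqrt_one_add_sub_one {m : Type*} {X : α → Matrix m n ℝ}
    (hM : ∀ t, (M t).PosSemidef) (hlim : Tendsto M l (𝓝 0))
    (hXM : Tendsto (fun t => X t * M t) l (𝓝 0)) :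
    Tendsto (fun t => X t * (invSqrt (1 + M t) - 1)) l (𝓝 0) := by
  simpa [invSqrt_one_add_sub_one (hM _), Matrix.mul_assoc] using
    hXM.matrix_mul (tendsto_cfc_one_add continuousOn_neg_inv_sqrt_mul_one_add_sqrt hM hlim)

end Tendsto

end InvSqrt

theorem stmt_6_general (k q r : ℕ)
    (Ξ₁₁ : Matrix (Fin (k - q)) (Fin r) ℝ) (Ξ₁₂ : Matrix (Fin (k - q)) (Fin q) ℝ)
    (Ξ₂₁ : Matrix (Fin q) (Fin r) ℝ)
    (Ξ₂₂ : ℝ → Matrix (Fin q) (Fin q) ℝ)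
    (hunit : ∀ t, IsUnit (Ξ₂₂ t))
    (hlim : Tendsto (fun t => (Ξ₂₂ t)⁻¹) atTop (nhds (0 : Matrix (Fin q) (Fin q) ℝ))) :
    Tendsto (fun t => invSqrt (1 + ((Ξ₂₂ t)⁻¹ * Ξ₂₁)ᵀ * ((Ξ₂₂ t)⁻¹ * Ξ₂₁))) atTop
      (nhds (1 : Matrix (Fin r) (Fin r) ℝ)) ∧
    Tendsto (fun t => invSqrt (1 + ((Ξ₂₂ t)⁻¹ * Ξ₂₁) * ((Ξ₂₂ t)⁻¹ * Ξ₂₁)ᵀ)) atTop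
      (nhds (1 : Matrix (Fin q) (Fin q) ℝ)) ∧
    Tendsto (fun t => (Ξ₁₁ - Ξ₁₂ * (Ξ₂₂ t)⁻¹ * Ξ₂₁) *
        invSqrt (1 + ((Ξ₂₂ t)⁻¹ * Ξ₂₁)ᵀ * ((Ξ₂₂ t)⁻¹ * Ξ₂₁))) atTop (nhds Ξ₁₁) ∧
    Tendsto (fun t => (Ξ₁₁ * Ξ₂₁ᵀ * ((Ξ₂₂ t)⁻¹)ᵀ + Ξ₁₂) *
        invSqrt (1 + ((Ξ₂₂ t)⁻¹ * Ξ₂₁) * ((Ξ₂₂ t)⁻¹ * Ξ₂₁)ᵀ)) atTop (nhds Ξ₁₂) ∧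
    Tendsto (fun t => (Ξ₂₁ * Ξ₂₁ᵀ * ((Ξ₂₂ t)⁻¹)ᵀ + Ξ₂₂ t) *
        invSqrt (1 + ((Ξ₂₂ t)⁻¹ * Ξ₂₁) * ((Ξ₂₂ t)⁻¹ * Ξ₂₁)ᵀ) - Ξ₂₂ t) atTop
      (nhds (0 : Matrix (Fin q) (Fin q) ℝ)) := by
  have hB : Tendsto (fun t => (Ξ₂₂ t)⁻¹ * Ξ₂₁) atTop (𝓝 0) := by
    simpa using hlim.matrix_mul tendsto_const_nhds
  have hBBt : Tendsto (fun t => (Ξ₂₂ t)⁻¹ * Ξ₂₁ * ((Ξ₂₂ t)⁻¹ * Ξ₂₁)ᵀ) atTop (𝓝 0) := by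
    simpa using hB.matrix_mul hB.matrix_transpose
  have hBBt_psd t := posSemidef_self_mul_transpose ((Ξ₂₂ t)⁻¹ * Ξ₂₁)
  have hO₁₁ := tendsto_invSqrt_one_add (fun t => posSemidef_transpose_mul_self ((Ξ₂₂ t)⁻¹ * Ξ₂₁))
    (by simpa using hB.matrix_transpose.matrix_mul hB)
  have hO₂₂ := tendsto_invSqrt_one_add hBBt_psd hBBt
  have hΞ₂₂B t : Ξ₂₂ t * ((Ξ₂₂ t)⁻¹ * Ξ₂₁) = Ξ₂₁ := by
    rw [← Matrix.mul_assoc, mul_nonsing_inv _ ((isUnit_iff_isUnit_det _).mp (hunit t)),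
      Matrix.one_mul]
  refine ⟨hO₁₁, hO₂₂, ?_, ?_, ?_⟩
  · simpa using (((tendsto_const_nhds (x := Ξ₁₂)).matrix_mul hlim).matrix_mul
      (tendsto_const_nhds (x := Ξ₂₁))).const_sub Ξ₁₁ |>.matrix_mul hO₁₁
  · simpa using ((tendsto_const_nhds.matrix_mul hlim.matrix_transpose).add_const Ξ₁₂).matrix_mul hO₂₂
  · have hcorr := tendsto_mul_invSqrt_one_add_sub_one hBBt_psd hBBt (X := Ξ₂₂)
      (by simpa [← Matrix.mul_assoc, hΞ₂₂B] using tendsto_const_nhds.matrix_mul hB.matrix_transpose)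
    have hmain := ((tendsto_const_nhds (x := Ξ₂₁ * Ξ₂₁ᵀ)).matrix_mul
      hlim.matrix_transpose).matrix_mul hO₂₂
    rw [transpose_zero, Matrix.mul_zero, Matrix.zero_mul] at hmain
    refine (add_zero (0 : Matrix (Fin q) (Fin q) ℝ) ▸ hmain.add hcorr).congr fun t => ?_
    rw [Matrix.mul_sub, Matrix.mul_one, Matrix.add_mul, add_sub_assoc]

/-- limits of the blocks of `Ξ̃(t)` as `Ξ₂₂(t)⁻¹ → 0`, where
`B(t) = Ξ₂₂(t)⁻¹Ξ₂₁`, `O11(t) = (I_r + B(t)ᵀB(t))^{-1/2}`, `O22(t) = (I_q + B(t)B(t)ᵀ)^{-1/2}`. -/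
theorem stmt_6 (k q r : ℕ) (hq : 0 < q) (hr : 0 < r) (hk : q < k)
    (Ξ₁₁ : Matrix (Fin (k - q)) (Fin r) ℝ) (Ξ₁₂ : Matrix (Fin (k - q)) (Fin q) ℝ)
    (Ξ₂₁ : Matrix (Fin q) (Fin r) ℝ)
    (Ξ₂₂ : ℝ → Matrix (Fin q) (Fin q) ℝ)
    (hunit : ∀ t, IsUnit (Ξ₂₂ t))
    (hlim : Tendsto (fun t => (Ξ₂₂ t)⁻¹) atTop (nhds (0 : Matrix (Fin q) (Fin q) ℝ))) :
    Tendsto (fun t => invSqrt (1 + ((Ξ₂₂ t)⁻¹ * Ξ₂₁)ᵀ * ((Ξ₂₂ t)⁻¹ * Ξ₂₁))) atTop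
      (nhds (1 : Matrix (Fin r) (Fin r) ℝ)) ∧
    Tendsto (fun t => invSqrt (1 + ((Ξ₂₂ t)⁻¹ * Ξ₂₁) * ((Ξ₂₂ t)⁻¹ * Ξ₂₁)ᵀ)) atTop
      (nhds (1 : Matrix (Fin q) (Fin q) ℝ)) ∧
    Tendsto (fun t => (Ξ₁₁ - Ξ₁₂ * (Ξ₂₂ t)⁻¹ * Ξ₂₁) *
        invSqrt (1 + ((Ξ₂₂ t)⁻¹ * Ξ₂₁)ᵀ * ((Ξ₂₂ t)⁻¹ * Ξ₂₁))) atTop (nhds Ξ₁₁) ∧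
    Tendsto (fun t => (Ξ₁₁ * Ξ₂₁ᵀ * ((Ξ₂₂ t)⁻¹)ᵀ + Ξ₁₂) *
        invSqrt (1 + ((Ξ₂₂ t)⁻¹ * Ξ₂₁) * ((Ξ₂₂ t)⁻¹ * Ξ₂₁)ᵀ)) atTop (nhds Ξ₁₂) ∧
    Tendsto (fun t => (Ξ₂₁ * Ξ₂₁ᵀ * ((Ξ₂₂ t)⁻¹)ᵀ + Ξ₂₂ t) *
        invSqrt (1 + ((Ξ₂₂ t)⁻¹ * Ξ₂₁) * ((Ξ₂₂ t)⁻¹ * Ξ₂₁)ᵀ) - Ξ₂₂ t) atTop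
      (nhds (0 : Matrix (Fin q) (Fin q) ℝ)) :=
  stmt_6_general k q r Ξ₁₁ Ξ₁₂ Ξ₂₁ Ξ₂₂ hunit hlim
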